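/- Let g₁, g₂ : ℝ → ℝ be g₁(x) = x² and g₂(x) = x³, and let G be the semigroup generated by {g₁, g₂} under composition. Then for every 0 < ε < 1 there is no (ε, g₁)-chain from −1 to itself; in particular, −1 is not a chain recurrent point for G, even though −1 is an orbit point (hence a nonwandering point) for G. -/

import Mathlib

/-- An `(ε, g)`-chain from `a` to `b` for the semigroup `G` on a metric space `X`:
a finite sequence `a = x₀, …, xₙ = b` (with `n ≥ 1`) together with maps
`g₀, …, g_{n-1} ∈ Ĝ = G ∪ {identity}` such that `d(gᵢ(g(xᵢ)), x_{i+1}) < ε` for each `i`. -/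
def EpsChain {X : Type*} [MetricSpace X] (G : Set (X → X)) (ε : ℝ) (g : X → X)
    (a b : X) : Prop :=
  ∃ n : ℕ, 0 < n ∧ ∃ x : Fin (n + 1) → X, ∃ gs : Fin n → X → X,
    x 0 = a ∧ x (Fin.last n) = b ∧
    ∀ i : Fin n, gs i ∈ G ∪ {(id : X → X)} ∧ dist (gs i (g (x i.castSucc))) (x i.succ) < ε

/-- `x` is a chain recurrent point for `G`: for every `ε > 0` and every `g ∈ G` there is an
`(ε, g)`-chain from `x` to itself. -/
def ChainRecurrent {X : Type*} [MetricSpace X] (G : Set (X → X)) (x : X) : Prop :=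
  ∀ ε > 0, ∀ g ∈ G, EpsChain G ε g x x

/-- `g₁(x) = x²`. -/
noncomputable def g1 : ℝ → ℝ := fun x => x ^ 2

/-- `g₂(x) = x³`. -/
noncomputable def g2 : ℝ → ℝ := fun x => x ^ 3

/-- The semigroup generated by `{g₁, g₂}`: all finite (nonempty) compositions. -/
noncomputable def Gsemi : Set (ℝ → ℝ) :=
  {f | ∃ l : List (ℝ → ℝ), l ≠ [] ∧ (∀ u ∈ l, u = g1 ∨ u = g2) ∧ f = l.foldr (· ∘ ·) id}

lemma foldr_nonneg (l : List (ℝ → ℝ)) (hl : ∀ u ∈ l, u = g1 ∨ u = g2) :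
    ∀ y : ℝ, 0 ≤ y → 0 ≤ l.foldr (· ∘ ·) id y := by
  induction l with
  | nil => intro y hy; simpa using hy
  | cons a t ih =>
    intro y hy
    have ht : ∀ u ∈ t, u = g1 ∨ u = g2 := fun u hu => hl u (List.mem_cons_of_mem a hu)
    have h2 := ih ht y hy
    rcases hl a List.mem_cons_self with h | h <;> subst h <;>
      simp only [List.foldr_cons, Function.comp_apply, g1, g2] <;> positivity

lemma mem_nonneg {f : ℝ → ℝ} (hf : f ∈ Gsemi ∪ {(id : ℝ → ℝ)}) :
    ∀ y : ℝ, 0 ≤ y → 0 ≤ f y := by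
  rcases hf with ⟨l, -, hl, rfl⟩ | hf
  · exact foldr_nonneg l hl
  · simp only [Set.mem_singleton_iff] at hf; subst hf; exact fun y hy => hy

/-- For `g₁(x) = x²`, `g₂(x) = x³` and `G = ⟨g₁, g₂⟩` on `ℝ`: for every `0 < ε < 1` there is
no `(ε, g₁)`-chain from `-1` to itself; in particular `-1` is not a chain recurrent point for
`G`, even though `-1` is an orbit point (indeed `g₂(-1) = -1`). -/
theorem neg_one_not_chainRecurrent :
    (∀ ε : ℝ, 0 < ε → ε < 1 → ¬ EpsChain Gsemi ε g1 (-1 : ℝ) (-1 : ℝ)) ∧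
    ¬ ChainRecurrent Gsemi (-1 : ℝ) ∧
    (∃ g ∈ Gsemi, g (-1 : ℝ) = -1) := by
  have hg1 : g1 ∈ Gsemi := ⟨[g1], by simp, by simp, by simp⟩
  have main : ∀ ε : ℝ, 0 < ε → ε < 1 → ¬ EpsChain Gsemi ε g1 (-1 : ℝ) (-1 : ℝ) := by
    intro ε hε hε1 ⟨n, hn, x, gs, hx0, hxl, hstep⟩
    set i : Fin n := ⟨n - 1, by omega⟩
    have hisucc : i.succ = Fin.last n := by
      ext; simp [i, Fin.last]; omega
    obtain ⟨hmem, hd⟩ := hstep i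
    have h0 : (0:ℝ) ≤ gs i (g1 (x i.castSucc)) :=
      mem_nonneg hmem _ (by simp [g1]; positivity)
    rw [hisucc, hxl] at hd
    rw [Real.dist_eq] at hd
    have : (1:ℝ) ≤ |gs i (g1 (x i.castSucc)) - -1| := by
      rw [abs_of_nonneg (by linarith)]; linarith
    linarith
  refine ⟨main, fun h => main (1/2) (by norm_num) (by norm_num)
      (h (1/2) (by norm_num) g1 hg1), ⟨g2, ⟨[g2], by simp, by simp, by simp⟩, by norm_num [g2]⟩⟩
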